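/- arXiv:2210.13194 — 8 statements merged into one kernel-verified Lean document; each statement's English description precedes it below -/
import Mathlib

section
/- Removing consumers whose value is strictly below the price does not affect optimality: if p is optimal for coalition C, and C' is obtained from C by setting the measure of every value strictly less than p to zero (keeping other measures unchanged), then p is optimal for C'. -/
/-- Revenue of price `v j` on coalition (measure function) `g`:
`v j * (measure of consumers with value ≥ v j)`. -/
noncomputable def rev {n : ℕ} (v g : Fin n → ℝ) (j : Fin n) : ℝ :=
  v j * ∑ i ∈ Finset.univ.filter (fun i => v j ≤ v i), g i

/-- `v j` is an optimal price for coalition `g`. -/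
def IsOptimal {n : ℕ} (v g : Fin n → ℝ) (j : Fin n) : Prop :=
  ∀ j' : Fin n, rev v g j' ≤ rev v g j

/-- Consumer surplus of a value-`x` consumer facing price `p`. -/
noncomputable def CS (x p : ℝ) : ℝ := max (x - p) 0

/-- Removing consumers whose value is strictly below the price preserves optimality. -/
theorem stmt4 (n : ℕ) (v : Fin n → ℝ) (hv : StrictMono v) (hvpos : ∀ i, 0 < v i)
    (g : Fin n → ℝ) (hg : ∀ i, 0 ≤ g i) (j : Fin n) (hopt : IsOptimal v g j) :
    IsOptimal v (fun i => if v i < v j then 0 else g i) j := by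
  intro j'
  have h1 : rev v (fun i => if v i < v j then 0 else g i) j = rev v g j := by
    unfold rev
    congr 1
    apply Finset.sum_congr rfl
    intro i hi
    simp only [Finset.mem_filter] at hi
    beta_reduce
    rw [if_neg (not_lt.mpr hi.2)]
  have h2 : rev v (fun i => if v i < v j then 0 else g i) j' ≤ rev v g j' := by
    unfold rev
    apply mul_le_mul_of_nonneg_left _ (le_of_lt (hvpos j'))
    apply Finset.sum_le_sum
    intro i _
    split
    · exact hg i
    · exact le_rfl
  rw [h1]
  exact h2.trans (hopt j')
end

section
/- Succinct characterization of saturation (one direction): let (C, p) and (C', p') be segments with p < p', and suppose some price p̂ with p < p̂ ≤ min{v : f^{C'}(v) > 0} is optimal for C. Then for any coalition C'' ≤ C' (pointwise) of positive total measure, price p is not optimal for the coalition C + C''. In particular p̂ yields strictly higher revenue than p on C + C''. -/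
/-- Saturation, sufficiency of the succinct condition: if some price `v ĵ` with
`p < v ĵ ≤ min value of C'` is optimal for `C`, then adding any positive-measure
subset of `C'` to `C` makes `p` sub-optimal, and `v ĵ` earns strictly more than `p`. -/
theorem stmt5 (n : ℕ) (v : Fin n → ℝ) (hv : StrictMono v) (hvpos : ∀ i, 0 < v i)
    (C C' C'' : Fin n → ℝ) (hC : ∀ i, 0 ≤ C i) (hC' : ∀ i, 0 ≤ C' i)
    (jp jp' jhat : Fin n)
    (hseg : IsOptimal v C jp) (hseg' : IsOptimal v C' jp')
    (hpp' : v jp < v jp')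
    (hhat1 : v jp < v jhat)
    (hhat2 : ∀ i, 0 < C' i → v jhat ≤ v i)
    (hhatopt : IsOptimal v C jhat)
    (hsub : ∀ i, 0 ≤ C'' i ∧ C'' i ≤ C' i) (hpos : 0 < ∑ i, C'' i) :
    ¬ IsOptimal v (fun i => C i + C'' i) jp ∧
      rev v (fun i => C i + C'' i) jp < rev v (fun i => C i + C'' i) jhat := by
  have hC''0 : ∀ i, ¬ v jhat ≤ v i → C'' i = 0 := by
    intro i h
    by_contra hne
    have hpos' : 0 < C'' i := lt_of_le_of_ne (hsub i).1 (Ne.symm hne)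
    exact h (hhat2 i (lt_of_lt_of_le hpos' (hsub i).2))
  have hsum : ∀ j : Fin n, v j ≤ v jhat →
      ∑ i ∈ Finset.univ.filter (fun i => v j ≤ v i), C'' i = ∑ i, C'' i := by
    intro j hj
    apply Finset.sum_filter_of_ne
    intro i _ hne
    by_contra hlt
    exact hne (hC''0 i (fun hle => hlt (le_trans hj hle)))
  have hrevlt : rev v (fun i => C i + C'' i) jp < rev v (fun i => C i + C'' i) jhat := by
    have e1 : ∀ j, rev v (fun i => C i + C'' i) j = rev v C j + rev v C'' j := by
      intro j; simp [rev, Finset.sum_add_distrib, mul_add]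
    rw [e1, e1]
    have h1 := hhatopt jp
    have h2 : rev v C'' jp < rev v C'' jhat := by
      unfold rev
      rw [hsum jp (le_of_lt hhat1), hsum jhat le_rfl]
      exact mul_lt_mul_of_pos_right hhat1 hpos
    linarith
  exact ⟨fun h => absurd (h jhat) (not_le.mpr hrevlt), hrevlt⟩
end

section
/- Succinct characterization of saturation (converse direction): let (C, p) be a segment and let v* be a value with v* > p. If no price p̂ with p < p̂ ≤ v* is optimal for C, then for all sufficiently small ε > 0, price p remains optimal for the coalition obtained from C by adding measure ε of consumers with value v*. -/
lemma rev_add {n : ℕ} (v C : Fin n → ℝ) (istar j : Fin n) (ε : ℝ) :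
    rev v (fun i => C i + if i = istar then ε else 0) j
      = rev v C j + (if v j ≤ v istar then v j * ε else 0) := by
  unfold rev
  rw [Finset.sum_add_distrib, mul_add]
  congr 1
  rw [Finset.sum_ite_eq' (Finset.univ.filter (fun i => v j ≤ v i)) istar (fun _ => ε)]
  by_cases h : v j ≤ v istar <;> simp [h, Finset.mem_filter]

/-- Saturation, necessity of the succinct condition: if no price `v ĵ` with
`p < v ĵ ≤ v*` is optimal for `C`, then for all sufficiently small `ε > 0`,
`p` remains optimal after adding measure `ε` of value-`v*` consumers. -/
theorem stmt6 (n : ℕ) (v : Fin n → ℝ) (hv : StrictMono v) (hvpos : ∀ i, 0 < v i)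
    (C : Fin n → ℝ) (hC : ∀ i, 0 ≤ C i) (jp istar : Fin n)
    (hseg : IsOptimal v C jp) (hstar : v jp < v istar)
    (hno : ∀ jhat, v jp < v jhat → v jhat ≤ v istar → ¬ IsOptimal v C jhat) :
    ∃ ε₀ > 0, ∀ ε : ℝ, 0 < ε → ε ≤ ε₀ →
      IsOptimal v (fun i => C i + if i = istar then ε else 0) jp := by
  classical
  set S : Finset (Fin n) :=
    Finset.univ.filter (fun j => v jp < v j ∧ v j ≤ v istar) with hS
  have hgap : ∀ j ∈ S, 0 < rev v C jp - rev v C j := by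
    intro j hj
    rw [hS, Finset.mem_filter] at hj
    have h1 : rev v C j ≤ rev v C jp := hseg j
    have h2 : rev v C j ≠ rev v C jp := by
      intro h
      exact hno j hj.2.1 hj.2.2 (fun j' => h ▸ hseg j')
    have := lt_of_le_of_ne h1 h2
    linarith
  set M : ℝ := if h : S.Nonempty then S.inf' h (fun j => rev v C jp - rev v C j) else 1
    with hM
  have hMpos : 0 < M := by
    rw [hM]
    split_ifs with h
    · exact (Finset.lt_inf'_iff h).2 (fun j hj => hgap j hj)
    · norm_num
  have hMle : ∀ j ∈ S, M ≤ rev v C jp - rev v C j := by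
    intro j hj
    rw [hM]
    rw [dif_pos ⟨j, hj⟩]
    exact Finset.inf'_le _ hj
  have hd : 0 < v istar - v jp := by linarith
  refine ⟨M / (v istar - v jp), div_pos hMpos hd, ?_⟩
  intro ε hε hεle j
  rw [rev_add, rev_add]
  have hjp : v jp ≤ v istar := le_of_lt hstar
  rw [if_pos hjp]
  by_cases h1 : v j ≤ v istar
  · rw [if_pos h1]
    by_cases h2 : v j ≤ v jp
    · have := hseg j
      nlinarith
    · push_neg at h2
      have hjS : j ∈ S := by
        rw [hS, Finset.mem_filter]
        exact ⟨Finset.mem_univ j, h2, h1⟩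
      have hM' := hMle j hjS
      have hεb : ε * (v istar - v jp) ≤ M := by
        rw [le_div_iff₀ hd] at hεle
        exact hεle
      have : v j * ε - v jp * ε ≤ M := by nlinarith
      linarith
  · rw [if_neg h1]
    have := hseg j
    have : 0 ≤ v jp * ε := le_of_lt (mul_pos (hvpos jp) hε)
    linarith
end

section
/- Any inefficient segmentation is Pareto dominated: if a segmentation contains a segment (C,p) with p strictly greater than the lowest value present in C, then there exists another segmentation in which every consumer's surplus is weakly higher and a positive measure of consumers have strictly higher surplus. -/
open Finset

lemma exists_pos_le_one_mul_lt {a b : ℝ} (ha : 0 < a) (hb : 0 ≤ b) :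
    ∃ δ, 0 < δ ∧ δ ≤ 1 ∧ δ * b < a := by
  obtain ⟨c, hc, hcb⟩ := exists_pos_mul_lt ha b
  refine ⟨min c 1, lt_min hc one_pos, min_le_right c 1, ?_⟩
  rw [mul_comm]
  exact (mul_le_mul_of_nonneg_left (min_le_left c 1) hb).trans_lt hcb

section Revenue

variable {n : ℕ} {v g g' : Fin n → ℝ} {j p i₀ : Fin n}

lemma rev_congr (h : ∀ i, v j ≤ v i → g' i = g i) : rev v g' j = rev v g j := by
  unfold rev
  rw [sum_congr rfl fun i hi => h i (mem_filter.1 hi).2]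

lemma rev_smul (a : ℝ) : rev v (a • g) j = a * rev v g j := by
  simp only [rev, Pi.smul_apply, smul_eq_mul, ← mul_sum]
  ring

lemma rev_mono (hv : 0 ≤ v j) (h : g' ≤ g) : rev v g' j ≤ rev v g j :=
  mul_le_mul_of_nonneg_left (sum_le_sum fun i _ => h i) hv

lemma rev_nonneg (hv : 0 ≤ v j) (hg : 0 ≤ g) : 0 ≤ rev v g j :=
  mul_nonneg hv (sum_nonneg fun i _ => hg i)

lemma mul_le_rev (hv : 0 ≤ v j) (hg : 0 ≤ g) {i : Fin n} (hi : v j ≤ v i) :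
    v j * g i ≤ rev v g j :=
  mul_le_mul_of_nonneg_left (single_le_sum (fun i _ => hg i) (by simpa using hi)) hv

lemma exists_isOptimal [NeZero n] (v g : Fin n → ℝ) : ∃ j, IsOptimal v g j :=
  Finite.exists_max (rev v g)

lemma IsOptimal.smul (h : IsOptimal v g j) {a : ℝ} (ha : 0 ≤ a) : IsOptimal v (a • g) j :=
  fun j' => by simpa only [rev_smul] using mul_le_mul_of_nonneg_left (h j') ha

lemma IsOptimal.of_le (h : IsOptimal v g j) (hv : ∀ i, 0 ≤ v i) (hle : g' ≤ g)
    (heq : ∀ i, v j ≤ v i → g' i = g i) : IsOptimal v g' j :=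
  fun j' => (rev_mono (hv j') hle).trans ((h j').trans (rev_congr heq).ge)

lemma IsOptimal.update_zero (h : IsOptimal v g p) (hv : ∀ i, 0 ≤ v i) (hg : 0 ≤ g)
    (hlt : v i₀ < v p) : IsOptimal v (Function.update g i₀ 0) p := by
  refine h.of_le hv (fun i => ?_) fun i hi => Function.update_of_ne ?_ _ _
  · rcases eq_or_ne i i₀ with rfl | hi
    · simpa using hg i
    · simp [hi]
  · rintro rfl
    exact hi.not_gt hlt

lemma IsOptimal.le_of_forall_rev_lt (h : IsOptimal v g p) (hv : 0 ≤ v i₀) (hg : 0 ≤ g)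
    (hrev : ∀ j, v i₀ < v j → rev v g j < v i₀ * g i₀) : v p ≤ v i₀ :=
  not_lt.1 fun hp => (hrev p hp).not_ge ((mul_le_rev hv hg le_rfl).trans (h i₀))

lemma IsOptimal.exists_pos (h : IsOptimal v g p) (hv : ∀ i, 0 < v i) (hg : 0 ≤ g)
    (hi₀ : 0 < g i₀) : ∃ i, v p ≤ v i ∧ 0 < g i := by
  have hpos : 0 < ∑ i ∈ univ.filter (fun i => v p ≤ v i), g i := by
    refine pos_of_mul_pos_right ?_ (hv p).le
    exact (mul_pos (hv i₀) hi₀).trans_le ((mul_le_rev (hv i₀).le hg le_rfl).trans (h i₀))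
  obtain ⟨i, hi, hgi⟩ := exists_lt_of_sum_lt (f := fun _ => (0 : ℝ)) (by simpa using hpos)
  exact ⟨i, (mem_filter.1 hi).2, hgi⟩

lemma IsOptimal.exists_split (h : IsOptimal v g p) (hv : ∀ i, 0 < v i) (hg : 0 ≤ g)
    (hi₀ : 0 < g i₀) (hlt : v i₀ < v p) :
    ∃ B A : Fin n → ℝ, ∃ q, 0 ≤ B ∧ 0 ≤ A ∧ B + A = g ∧ IsOptimal v B p ∧ IsOptimal v A q ∧
      v q ≤ v i₀ ∧ ∀ i, 0 < g i → 0 < A i := by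
  obtain ⟨δ, hδ, hδ_le, hδK⟩ :=
    exists_pos_le_one_mul_lt (mul_pos (hv i₀) hi₀) (rev_nonneg (hv p).le hg)
  set B := (1 - δ) • Function.update g i₀ 0
  set A := g - B
  have hA_apply : ∀ i, A i = if i = i₀ then g i₀ else δ * g i := by
    intro i
    rcases eq_or_ne i i₀ with rfl | hi
    · simp [A, B]
    · simp [A, B, hi]; ring
  have hA : 0 ≤ A := fun i => by
    rw [hA_apply]; split_ifs
    exacts [hg i₀, mul_nonneg hδ.le (hg i)]
  have hB : 0 ≤ B := smul_nonneg (sub_nonneg.2 hδ_le) fun i => by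
    rcases eq_or_ne i i₀ with rfl | hi
    · simp
    · simpa [hi] using hg i
  have : NeZero n := ⟨i₀.pos.ne'⟩
  obtain ⟨q, hq⟩ := exists_isOptimal v A
  refine ⟨B, A, q, hB, hA, add_sub_cancel B g,
    (h.update_zero (fun i => (hv i).le) hg hlt).smul (sub_nonneg.2 hδ_le), hq,
    hq.le_of_forall_rev_lt (hv i₀).le hA fun j hj => ?_, fun i hi => ?_⟩
  · calc rev v A j = δ * rev v g j := by
          rw [← rev_smul]
          refine rev_congr fun i hi => ?_
          rw [hA_apply, if_neg (ne_of_apply_ne v (hj.trans_le hi).ne')]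
          rfl
      _ ≤ δ * rev v g p := mul_le_mul_of_nonneg_left (h j) hδ.le
      _ < v i₀ * g i₀ := hδK
      _ = v i₀ * A i₀ := by rw [hA_apply, if_pos rfl]
  · rw [hA_apply]; split_ifs
    exacts [hi₀, mul_pos hδ hi]

end Revenue

lemma CS_le_CS {x p p' : ℝ} (h : p' ≤ p) : CS x p ≤ CS x p' :=
  max_le_max (by linarith) le_rfl

lemma CS_lt_CS {x p p' : ℝ} (h : p' < p) (hx : p' < x) : CS x p < CS x p' := by
  unfold CS
  rw [max_eq_left (sub_pos.2 hx).le]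
  exact max_lt (by linarith) (sub_pos.2 hx)

section Split

variable {n k : ℕ} (g : Fin k → Fin n → ℝ) (c₀ : Fin k) (B A : Fin n → ℝ)

def splitSegments : Fin (k + 1) → Fin n → ℝ :=
  Fin.snoc (Function.update g c₀ B) A

/-- Consumers stay in their segment, except that those of `c₀` are shared between `B` and the new
segment `A`. -/
def splitTransport (c : Fin k) : Fin (k + 1) → Fin n → ℝ :=
  Fin.snoc (Pi.single c (Function.update g c₀ B c)) (if c = c₀ then A else 0)

variable {g c₀ B A}

@[simp] lemma splitSegments_castSucc (c : Fin k) :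
    splitSegments g c₀ B A c.castSucc = Function.update g c₀ B c := Fin.snoc_castSucc ..

@[simp] lemma splitSegments_last : splitSegments g c₀ B A (Fin.last k) = A := Fin.snoc_last ..

@[simp] lemma splitTransport_castSucc (c d : Fin k) :
    splitTransport g c₀ B A c d.castSucc =
      (Pi.single c (Function.update g c₀ B c) : Fin k → Fin n → ℝ) d :=
  Fin.snoc_castSucc ..

@[simp] lemma splitTransport_last (c : Fin k) :
    splitTransport g c₀ B A c (Fin.last k) = if c = c₀ then A else 0 := Fin.snoc_last ..

lemma sum_splitSegments (hBA : B + A = g c₀) (i : Fin n) :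
    ∑ c', splitSegments g c₀ B A c' i = ∑ c, g c i := by
  have hupdate : ∀ c, Function.update g c₀ B c i = g c i - if c = c₀ then A i else 0 := by
    intro c
    rcases eq_or_ne c c₀ with rfl | hc
    · simp [← hBA]
    · simp [hc]
  simp only [Fin.sum_univ_castSucc, splitSegments_castSucc, splitSegments_last, hupdate,
    sum_sub_distrib, sum_ite_eq', mem_univ, if_true, sub_add_cancel]

lemma sum_splitTransport (hBA : B + A = g c₀) (c : Fin k) (i : Fin n) :
    ∑ c', splitTransport g c₀ B A c c' i = g c i := by
  simp only [Fin.sum_univ_castSucc, splitTransport_castSucc, splitTransport_last,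
    ← Finset.sum_apply, sum_pi_single', mem_univ, if_true]
  rcases eq_or_ne c c₀ with rfl | hc
  · simp [← hBA]
  · simp [hc]

lemma sum_splitTransport_eq_splitSegments (c' : Fin (k + 1)) (i : Fin n) :
    ∑ c, splitTransport g c₀ B A c c' i = splitSegments g c₀ B A c' i := by
  induction c' using Fin.lastCases with
  | last => simp [apply_ite (fun F : Fin n → ℝ => F i)]
  | cast d => simp [Pi.single_apply, apply_ite (fun F : Fin n → ℝ => F i)]

lemma splitSegments_nonneg (hg : ∀ c i, 0 ≤ g c i) (hB : 0 ≤ B) (hA : 0 ≤ A)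
    (c' : Fin (k + 1)) (i : Fin n) : 0 ≤ splitSegments g c₀ B A c' i := by
  induction c' using Fin.lastCases with
  | last => simpa using hA i
  | cast c =>
    rcases eq_or_ne c c₀ with rfl | hc
    · simpa using hB i
    · simpa [hc] using hg c i

lemma splitTransport_nonneg (hg : ∀ c i, 0 ≤ g c i) (hB : 0 ≤ B) (hA : 0 ≤ A)
    (c : Fin k) (c' : Fin (k + 1)) (i : Fin n) : 0 ≤ splitTransport g c₀ B A c c' i := by
  induction c' using Fin.lastCases with
  | last =>
    rcases eq_or_ne c c₀ with rfl | hc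
    · simpa using hA i
    · simp [hc]
  | cast d =>
    rcases eq_or_ne d c with rfl | hd
    · simpa using splitSegments_nonneg hg hB hA d.castSucc i
    · simp [hd]

theorem exists_paretoImprovement_of_split {v f : Fin n → ℝ} {p : Fin k → Fin n} {q i₁ : Fin n}
    (hg : ∀ c i, 0 ≤ g c i) (hsum : ∀ i, ∑ c, g c i = f i)
    (hopt : ∀ c, IsOptimal v (g c) (p c)) (hB : 0 ≤ B) (hA : 0 ≤ A) (hBA : B + A = g c₀)
    (hBopt : IsOptimal v B (p c₀)) (hAopt : IsOptimal v A q) (hq : v q < v (p c₀))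
    (hi₁ : 0 < A i₁) (hqi₁ : v q < v i₁) :
    ∃ (k' : ℕ) (g' : Fin k' → Fin n → ℝ) (p' : Fin k' → Fin n),
      (∀ c' i, 0 ≤ g' c' i) ∧ (∀ i, ∑ c', g' c' i = f i) ∧
      (∀ c', IsOptimal v (g' c') (p' c')) ∧
      ∃ t : Fin k → Fin k' → Fin n → ℝ,
        (∀ c c' i, 0 ≤ t c c' i) ∧
        (∀ c i, ∑ c', t c c' i = g c i) ∧
        (∀ c' i, ∑ c, t c c' i = g' c' i) ∧
        (∀ c c' i, 0 < t c c' i → CS (v i) (v (p c)) ≤ CS (v i) (v (p' c'))) ∧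
        (∃ c c' i, 0 < t c c' i ∧ CS (v i) (v (p c)) < CS (v i) (v (p' c'))) := by
  refine ⟨k + 1, splitSegments g c₀ B A, Fin.snoc p q, splitSegments_nonneg hg hB hA,
    fun i => (sum_splitSegments hBA i).trans (hsum i), ?_, splitTransport g c₀ B A,
    splitTransport_nonneg hg hB hA, sum_splitTransport hBA, sum_splitTransport_eq_splitSegments, ?_,
    c₀, Fin.last k, i₁, by simpa using hi₁, by simpa using CS_lt_CS hq hqi₁⟩
  · intro c'
    induction c' using Fin.lastCases with
    | last => simpa using hAopt
    | cast c =>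
      rcases eq_or_ne c c₀ with rfl | hc
      · simpa using hBopt
      · simpa [hc] using hopt c
  · intro c c' i ht
    induction c' using Fin.lastCases with
    | last =>
      obtain rfl : c = c₀ := by by_contra hc; simp [hc] at ht
      simpa using CS_le_CS hq.le
    | cast d =>
      obtain rfl : d = c := by by_contra hd; simp [hd] at ht
      simp

end Split

theorem stmt7_general (n k : ℕ) (v f : Fin n → ℝ)
    (hvpos : ∀ i, 0 < v i)
    (g : Fin k → Fin n → ℝ) (p : Fin k → Fin n)
    (hg : ∀ c i, 0 ≤ g c i) (hsum : ∀ i, ∑ c, g c i = f i)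
    (hopt : ∀ c, IsOptimal v (g c) (p c))
    (hineff : ∃ c i, 0 < g c i ∧ v i < v (p c)) :
    ∃ (k' : ℕ) (g' : Fin k' → Fin n → ℝ) (p' : Fin k' → Fin n),
      (∀ c' i, 0 ≤ g' c' i) ∧ (∀ i, ∑ c', g' c' i = f i) ∧
      (∀ c', IsOptimal v (g' c') (p' c')) ∧
      ∃ t : Fin k → Fin k' → Fin n → ℝ,
        (∀ c c' i, 0 ≤ t c c' i) ∧
        (∀ c i, ∑ c', t c c' i = g c i) ∧
        (∀ c' i, ∑ c, t c c' i = g' c' i) ∧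
        (∀ c c' i, 0 < t c c' i → CS (v i) (v (p c)) ≤ CS (v i) (v (p' c'))) ∧
        (∃ c c' i, 0 < t c c' i ∧ CS (v i) (v (p c)) < CS (v i) (v (p' c'))) := by
  obtain ⟨c₀, i₀, hi₀, hlt⟩ := hineff
  obtain ⟨B, A, q, hB, hA, hBA, hBopt, hAopt, hq, hA_pos⟩ :=
    (hopt c₀).exists_split hvpos (hg c₀) hi₀ hlt
  obtain ⟨i₁, hi₁, hgi₁⟩ := (hopt c₀).exists_pos hvpos (hg c₀) hi₀
  exact exists_paretoImprovement_of_split hg hsum hopt hB hA hBA hBopt hAopt (hq.trans_lt hlt)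
    (hA_pos i₁ hgi₁) ((hq.trans_lt hlt).trans_le hi₁)

/-- Any inefficient segmentation is Pareto dominated: if some segment's price
exceeds the lowest value present in it, there is another segmentation together
with a reallocation (transport) of consumers under which every consumer's surplus
is weakly higher and a positive measure of consumers are strictly better off. -/
theorem stmt7 (n k : ℕ) (v f : Fin n → ℝ) (hv : StrictMono v)
    (hvpos : ∀ i, 0 < v i) (hf : ∀ i, 0 < f i)
    (g : Fin k → Fin n → ℝ) (p : Fin k → Fin n)
    (hg : ∀ c i, 0 ≤ g c i) (hsum : ∀ i, ∑ c, g c i = f i)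
    (hopt : ∀ c, IsOptimal v (g c) (p c))
    (hineff : ∃ c i, 0 < g c i ∧ v i < v (p c)) :
    ∃ (k' : ℕ) (g' : Fin k' → Fin n → ℝ) (p' : Fin k' → Fin n),
      (∀ c' i, 0 ≤ g' c' i) ∧ (∀ i, ∑ c', g' c' i = f i) ∧
      (∀ c', IsOptimal v (g' c') (p' c')) ∧
      ∃ t : Fin k → Fin k' → Fin n → ℝ,
        (∀ c c' i, 0 ≤ t c c' i) ∧
        (∀ c i, ∑ c', t c c' i = g c i) ∧
        (∀ c' i, ∑ c, t c c' i = g' c' i) ∧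
        (∀ c c' i, 0 < t c c' i → CS (v i) (v (p c)) ≤ CS (v i) (v (p' c'))) ∧
        (∃ c c' i, 0 < t c c' i ∧ CS (v i) (v (p c)) < CS (v i) (v (p' c'))) :=
  stmt7_general n k v f hvpos g p hg hsum hopt hineff
end

section
/- Any Pareto undominated segmentation is efficient: if a segmentation has a segment (C,p) with p > min{v : f^C(v) > 0}, then it is Pareto dominated by the segmentation obtained by splitting off a sub-coalition C' of C containing all lowest-value consumers of C plus an ε-fraction of consumers of every other value of C, priced at the lowest value of C, with the remainder of C keeping price p. -/
private lemma aux_sum {n : ℕ} (v : Fin n → ℝ) (im : Fin n) (w : Fin n → ℝ)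
    (hw : ∀ i, v i < v im → w i = 0) {j : Fin n} (hj : v j ≤ v im) :
    ∑ i ∈ Finset.univ.filter (fun i => v j ≤ v i), w i
      = ∑ i ∈ Finset.univ.filter (fun i => v im ≤ v i), w i := by
  refine (Finset.sum_subset ?_ ?_).symm
  · intro i hi
    simp only [Finset.mem_filter, Finset.mem_univ, true_and] at hi ⊢
    exact hj.trans hi
  · intro i hi hni
    simp only [Finset.mem_filter, Finset.mem_univ, true_and] at hi hni
    exact hw i (lt_of_not_ge hni)

/-- The explicit Pareto-dominating split of an inefficient segment: take a segment
`(g c₀, p c₀)` whose price exceeds the lowest value `v im` present in it; split off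
`C' ε` keeping all lowest-value consumers and an `ε`-fraction of every other value,
priced at `v im`.  For small `ε > 0`: (i) `v im` is optimal for `C' ε`,
(ii) `p c₀` remains optimal for the remainder, and the split Pareto dominates. -/
theorem stmt8 (n k : ℕ) (v f : Fin n → ℝ) (hv : StrictMono v)
    (hvpos : ∀ i, 0 < v i) (hf : ∀ i, 0 < f i)
    (g : Fin k → Fin n → ℝ) (p : Fin k → Fin n)
    (hg : ∀ c i, 0 ≤ g c i) (hsum : ∀ i, ∑ c, g c i = f i)
    (hopt : ∀ c, IsOptimal v (g c) (p c))
    (c₀ : Fin k) (im : Fin n)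
    (him : 0 < g c₀ im) (hmin : ∀ i, 0 < g c₀ i → v im ≤ v i)
    (hineff : v im < v (p c₀)) :
    ∃ ε₀ > 0, ∀ ε : ℝ, 0 < ε → ε < ε₀ →
      IsOptimal v (fun i => if i = im then g c₀ im else ε * g c₀ i) im ∧
      IsOptimal v (fun i => if i = im then 0 else (1 - ε) * g c₀ i) (p c₀) ∧
      (∀ i, 0 < (if i = im then g c₀ im else ε * g c₀ i) →
        CS (v i) (v (p c₀)) ≤ CS (v i) (v im)) ∧
      (∃ i, 0 < (if i = im then g c₀ im else ε * g c₀ i) ∧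
        CS (v i) (v (p c₀)) < CS (v i) (v im)) := by
  set g0 := g c₀ with hg0
  have hg0nn : ∀ i, 0 ≤ g0 i := fun i => hg c₀ i
  have hz : ∀ i, v i < v im → g0 i = 0 := by
    intro i hi
    by_contra h
    exact absurd (hmin i (lt_of_le_of_ne (hg0nn i) (Ne.symm h))) (not_le.mpr hi)
  set B : ℝ := (∑ j, v j) * (∑ i, g0 i) with hB
  have hBnn : 0 ≤ B :=
    mul_nonneg (Finset.sum_nonneg fun j _ => (hvpos j).le)
      (Finset.sum_nonneg fun i _ => hg0nn i)
  have hbound : ∀ j : Fin n,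
      v j * ∑ i ∈ Finset.univ.filter (fun i => v j ≤ v i), g0 i ≤ B := by
    intro j
    have h1 : ∑ i ∈ Finset.univ.filter (fun i => v j ≤ v i), g0 i ≤ ∑ i, g0 i :=
      Finset.sum_le_sum_of_subset_of_nonneg (Finset.filter_subset _ _)
        (fun i _ _ => hg0nn i)
    have h2 : v j ≤ ∑ j', v j' :=
      Finset.single_le_sum (fun j' _ => (hvpos j').le) (Finset.mem_univ j)
    calc v j * ∑ i ∈ Finset.univ.filter (fun i => v j ≤ v i), g0 i
        ≤ v j * ∑ i, g0 i := mul_le_mul_of_nonneg_left h1 (hvpos j).le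
      _ ≤ B := mul_le_mul_of_nonneg_right h2 (Finset.sum_nonneg fun i _ => hg0nn i)
  have hBpos : (0:ℝ) < B + 1 := by linarith
  refine ⟨min 1 (v im * g0 im / (B + 1)), lt_min one_pos
    (div_pos (mul_pos (hvpos im) him) hBpos), ?_⟩
  intro ε hε hεlt
  have hε1 : ε < 1 := lt_of_lt_of_le hεlt (min_le_left _ _)
  have hεB : ε * (B + 1) < v im * g0 im := by
    have := lt_of_lt_of_le hεlt (min_le_right _ _)
    exact (lt_div_iff₀ hBpos).mp this
  -- part (i)
  have key1 : IsOptimal v (fun i => if i = im then g0 im else ε * g0 i) im := by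
    intro j'
    set C' : Fin n → ℝ := fun i => if i = im then g0 im else ε * g0 i with hC'
    have hC'nn : ∀ i, 0 ≤ C' i := by
      intro i
      simp only [hC']
      split
      · exact him.le
      · exact mul_nonneg hε.le (hg0nn i)
    have hC'z : ∀ i, v i < v im → C' i = 0 := by
      intro i hi
      have hne : i ≠ im := fun e => absurd hi (by rw [e]; exact lt_irrefl _)
      simp only [hC', if_neg hne, hz i hi, mul_zero]
    have hmem : im ∈ Finset.univ.filter (fun i => v im ≤ v i) := by
      simp
    have hrev_im : v im * g0 im ≤ rev v C' im := by
      unfold rev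
      have h1 : C' im ≤ ∑ i ∈ Finset.univ.filter (fun i => v im ≤ v i), C' i :=
        Finset.single_le_sum (fun i _ => hC'nn i) hmem
      have h2 : C' im = g0 im := by simp [hC']
      rw [h2] at h1
      exact mul_le_mul_of_nonneg_left h1 (hvpos im).le
    by_cases hj : v j' ≤ v im
    · unfold rev
      rw [aux_sum v im C' hC'z hj]
      calc v j' * ∑ i ∈ Finset.univ.filter (fun i => v im ≤ v i), C' i
          ≤ v im * ∑ i ∈ Finset.univ.filter (fun i => v im ≤ v i), C' i :=
            mul_le_mul_of_nonneg_right hj (Finset.sum_nonneg fun i _ => hC'nn i)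
        _ = rev v C' im := rfl
    · push_neg at hj
      have hsum' : ∑ i ∈ Finset.univ.filter (fun i => v j' ≤ v i), C' i
          = ε * ∑ i ∈ Finset.univ.filter (fun i => v j' ≤ v i), g0 i := by
        rw [Finset.mul_sum]
        refine Finset.sum_congr rfl ?_
        intro i hi
        simp only [Finset.mem_filter, Finset.mem_univ, true_and] at hi
        have hne : i ≠ im := by
          intro e
          rw [e] at hi
          exact absurd (lt_of_lt_of_le hj hi) (lt_irrefl _)
        simp [hC', hne]
      have : rev v C' j' = ε * (v j' * ∑ i ∈ Finset.univ.filter (fun i => v j' ≤ v i), g0 i) := by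
        unfold rev
        rw [hsum']
        ring
      rw [this]
      have h3 : ε * (v j' * ∑ i ∈ Finset.univ.filter (fun i => v j' ≤ v i), g0 i) ≤ ε * B :=
        mul_le_mul_of_nonneg_left (hbound j') hε.le
      have h4 : ε * B ≤ ε * (B + 1) := by nlinarith
      linarith
  -- part (ii)
  have key2 : IsOptimal v (fun i => if i = im then 0 else (1 - ε) * g0 i) (p c₀) := by
    set g' : Fin n → ℝ := fun i => if i = im then 0 else g0 i with hg'
    have hg'nn : ∀ i, 0 ≤ g' i := by
      intro i; simp only [hg']; split
      · exact le_refl 0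
      · exact hg0nn i
    have hfact : ∀ j, rev v (fun i => if i = im then 0 else (1 - ε) * g0 i) j
        = (1 - ε) * rev v g' j := by
      intro j
      unfold rev
      have : ∀ i, (if i = im then (0:ℝ) else (1 - ε) * g0 i) = (1 - ε) * g' i := by
        intro i; simp only [hg']; split <;> ring
      simp only [this]
      rw [← Finset.mul_sum]
      ring
    have hg'z : ∀ i, v i < v im → g' i = 0 := by
      intro i hi
      have hne : i ≠ im := fun e => absurd hi (by rw [e]; exact lt_irrefl _)
      simp [hg', hne, hz i hi]
    have hgp : ∀ j, v im < v j → rev v g' j = rev v g0 j := by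
      intro j hj
      unfold rev
      congr 1
      refine Finset.sum_congr rfl ?_
      intro i hi
      simp only [Finset.mem_filter, Finset.mem_univ, true_and] at hi
      have hne : i ≠ im := by
        intro e; rw [e] at hi; exact absurd (lt_of_lt_of_le hj hi) (lt_irrefl _)
      simp [hg', hne]
    have hfree : ∀ j', rev v g' j' ≤ rev v g' (p c₀) := by
      intro j'
      rw [hgp (p c₀) hineff]
      by_cases hj : v j' ≤ v im
      · have hS' : ∑ i ∈ Finset.univ.filter (fun i => v im ≤ v i), g' i
            ≤ ∑ i ∈ Finset.univ.filter (fun i => v im ≤ v i), g0 i := by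
          refine Finset.sum_le_sum ?_
          intro i _
          simp only [hg']
          split
          · rename_i h; rw [h]; exact hg0nn im
          · exact le_refl _
        calc rev v g' j' = v j' * ∑ i ∈ Finset.univ.filter (fun i => v im ≤ v i), g' i := by
              unfold rev; rw [aux_sum v im g' hg'z hj]
          _ ≤ v im * ∑ i ∈ Finset.univ.filter (fun i => v im ≤ v i), g' i :=
              mul_le_mul_of_nonneg_right hj (Finset.sum_nonneg fun i _ => hg'nn i)
          _ ≤ v im * ∑ i ∈ Finset.univ.filter (fun i => v im ≤ v i), g0 i :=
              mul_le_mul_of_nonneg_left hS' (hvpos im).le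
          _ = rev v g0 im := rfl
          _ ≤ rev v g0 (p c₀) := hopt c₀ im
      · push_neg at hj
        rw [hgp j' hj]
        exact hopt c₀ j'
    intro j'
    rw [hfact j', hfact (p c₀)]
    exact mul_le_mul_of_nonneg_left (hfree j') (by linarith)
  refine ⟨key1, key2, ?_, ?_⟩
  · intro i _
    unfold CS
    exact max_le_max (by linarith) le_rfl
  · -- find a witness
    have hmem : im ∈ Finset.univ.filter (fun i => v im ≤ v i) := by simp
    have hSge : g0 im ≤ ∑ i ∈ Finset.univ.filter (fun i => v im ≤ v i), g0 i :=
      Finset.single_le_sum (fun i _ => hg0nn i) hmem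
    have hrevim : 0 < rev v g0 im := by
      unfold rev
      nlinarith [hvpos im]
    have hrevp : 0 < rev v g0 (p c₀) := lt_of_lt_of_le hrevim (hopt c₀ im)
    have hSp : 0 < ∑ i ∈ Finset.univ.filter (fun i => v (p c₀) ≤ v i), g0 i := by
      by_contra h
      push_neg at h
      have : rev v g0 (p c₀) ≤ 0 := by
        unfold rev
        exact mul_nonpos_of_nonneg_of_nonpos (hvpos (p c₀)).le h
      linarith
    obtain ⟨i, hi, hne⟩ := Finset.exists_ne_zero_of_sum_ne_zero (ne_of_gt hSp)
    simp only [Finset.mem_filter, Finset.mem_univ, true_and] at hi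
    have hgi : 0 < g0 i := lt_of_le_of_ne (hg0nn i) (Ne.symm hne)
    have hiim : i ≠ im := by
      intro e; rw [e] at hi; exact absurd (lt_of_lt_of_le hineff hi) (lt_irrefl _)
    refine ⟨i, ?_, ?_⟩
    · rw [if_neg hiim]
      exact mul_pos hε hgi
    · unfold CS
      have h1 : max (v i - v (p c₀)) 0 = v i - v (p c₀) := max_eq_left (by linarith)
      have h2 : max (v i - v im) 0 = v i - v im := max_eq_left (by linarith)
      rw [h1, h2]
      linarith
end

section
/- The core-emptiness direction: if v_1 is not an optimal price for the whole market, then every segmentation is objected to by some segment. Specifically, given any segmentation, pick a segment (C,p) with p > v_1; then a coalition C' consisting of a small measure of value-p consumers from C and a suitable positive measure of value-v_1 consumers, priced at v_1 (which is optimal for C' when the value-p measure is small enough relative to the value-v_1 measure), objects to the segmentation. -/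
/-- Core emptiness: if the lowest value is not optimal for the whole market, then
every segmentation is objected to by some segment `(C', v₁)`: all its members
weakly prefer it to the segmentation and a positive measure strictly prefer it. -/
theorem stmt10 (n k : ℕ) (hn : 0 < n) (v f : Fin n → ℝ) (hv : StrictMono v)
    (hvpos : ∀ i, 0 < v i) (hf : ∀ i, 0 < f i)
    (hlow : ¬ IsOptimal v f ⟨0, hn⟩)
    (g : Fin k → Fin n → ℝ) (p : Fin k → Fin n)
    (hg : ∀ c i, 0 ≤ g c i) (hsum : ∀ i, ∑ c, g c i = f i)
    (hopt : ∀ c, IsOptimal v (g c) (p c)) :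
    ∃ t : Fin k → Fin n → ℝ,
      (∀ c i, 0 ≤ t c i ∧ t c i ≤ g c i) ∧
      0 < ∑ i, ∑ c, t c i ∧
      IsOptimal v (fun i => ∑ c, t c i) ⟨0, hn⟩ ∧
      (∀ c i, 0 < t c i → CS (v i) (v (p c)) ≤ CS (v i) (v ⟨0, hn⟩)) ∧
      (∃ c i, 0 < t c i ∧ CS (v i) (v (p c)) < CS (v i) (v ⟨0, hn⟩)) := by
  set z : Fin n := ⟨0, hn⟩ with hz
  have hzle : ∀ i : Fin n, v z ≤ v i := fun i =>
    hv.monotone (by simp [Fin.le_def, hz])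
  -- linearity of rev in the measure
  have hlin : ∀ j, rev v f j = ∑ c, rev v (g c) j := by
    intro j
    unfold rev
    simp_rw [← hsum]
    rw [Finset.sum_comm, Finset.mul_sum]
  -- get a segment whose price beats z
  simp only [IsOptimal, not_forall, not_le] at hlow
  obtain ⟨j, hj⟩ := hlow
  have h1 : ∑ c, rev v (g c) z < ∑ c, rev v (g c) (p c) :=
    calc ∑ c, rev v (g c) z = rev v f z := (hlin z).symm
      _ < rev v f j := hj
      _ = ∑ c, rev v (g c) j := hlin j
      _ ≤ ∑ c, rev v (g c) (p c) := Finset.sum_le_sum fun c _ => hopt c j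
  obtain ⟨c₀, -, hc₀⟩ := Finset.exists_lt_of_sum_lt h1
  have hrev0 : 0 ≤ rev v (g c₀) z :=
    mul_nonneg (hvpos z).le (Finset.sum_nonneg fun i _ => hg c₀ i)
  have hrevpos : 0 < rev v (g c₀) (p c₀) := lt_of_le_of_lt hrev0 hc₀
  have hSpos : 0 < ∑ i ∈ Finset.univ.filter (fun i => v (p c₀) ≤ v i), g c₀ i := by
    by_contra h
    push_neg at h
    unfold rev at hrevpos
    nlinarith [hvpos (p c₀)]
  obtain ⟨i₀, hi₀mem, hi₀⟩ : ∃ i ∈ Finset.univ.filter (fun i => v (p c₀) ≤ v i), 0 < g c₀ i := by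
    by_contra h
    push_neg at h
    exact absurd (Finset.sum_nonpos fun i hi => h i hi) (not_le.mpr hSpos)
  have hi₀ge : v (p c₀) ≤ v i₀ := by simpa using hi₀mem
  have hpne : p c₀ ≠ z := by
    intro h; rw [h] at hc₀; exact lt_irrefl _ hc₀
  have hpz : v z < v (p c₀) := by
    apply hv
    simp only [Fin.lt_def, hz]
    exact Nat.pos_of_ne_zero (fun h => hpne (Fin.ext (by simp [hz, h])))
  have hi₀z : v z < v i₀ := lt_of_lt_of_le hpz hi₀ge
  have hi₀ne : i₀ ≠ z := fun h => absurd hi₀z (by simp [h])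
  -- the bound M = v L
  set L : Fin n := ⟨n - 1, by omega⟩ with hL
  have hM : ∀ j : Fin n, v j ≤ v L := fun j =>
    hv.monotone (by simp [Fin.le_def, hL]; omega)
  have hMpos : 0 < v L := hvpos L
  -- epsilon
  set ε : ℝ := min (g c₀ i₀) (v z * f z / v L) with hε
  have hεpos : 0 < ε :=
    lt_min hi₀ (div_pos (mul_pos (hvpos z) (hf z)) hMpos)
  have hεle : ε ≤ g c₀ i₀ := min_le_left _ _
  have hεM : v L * ε ≤ v z * f z := by
    have h : ε ≤ v z * f z / v L := min_le_right _ _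
    calc v L * ε ≤ v L * (v z * f z / v L) := by nlinarith
      _ = v z * f z := by field_simp
  -- the aggregated coalition
  have hagg : ∀ i : Fin n, (∑ c, ((if i = z then g c z else 0) +
      (if c = c₀ ∧ i = i₀ then ε else 0)))
      = (if i = z then f z else 0) + (if i = i₀ then ε else 0) := by
    intro i
    rw [Finset.sum_add_distrib]
    congr 1
    · by_cases h : i = z
      · simp [h, hsum z]
      · simp [h]
    · by_cases h : i = i₀
      · simp [h]
      · simp [h]
  have haggsum : ∑ i, ((if i = z then f z else 0) + (if i = i₀ then ε else 0))
      = f z + ε := by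
    rw [Finset.sum_add_distrib, Finset.sum_ite_eq' Finset.univ z (fun _ => f z),
      Finset.sum_ite_eq' Finset.univ i₀ (fun _ => ε)]
    simp
  refine ⟨fun c i => (if i = z then g c z else 0) + (if c = c₀ ∧ i = i₀ then ε else 0),
    ?_, ?_, ?_, ?_, ?_⟩
  · -- bounds
    intro c i
    dsimp only
    constructor
    · apply add_nonneg
      · split
        · exact hg c z
        · exact le_refl 0
      · split
        · exact hεpos.le
        · exact le_refl 0
    · by_cases h1 : i = z
      · subst h1
        rw [if_pos rfl, if_neg (fun h => hi₀ne h.2.symm), add_zero]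
      · by_cases h2 : c = c₀ ∧ i = i₀
        · obtain ⟨hc, hi⟩ := h2
          subst hc; subst hi
          rw [if_neg h1, zero_add, if_pos ⟨rfl, rfl⟩]
          exact hεle
        · rw [if_neg h1, if_neg h2, add_zero]
          exact hg c i
  · -- positive total mass
    have h : (∑ i, ∑ c, ((if i = z then g c z else 0) +
        (if c = c₀ ∧ i = i₀ then ε else 0))) = f z + ε := by
      simp_rw [hagg]; exact haggsum
    rw [h]
    linarith [hf z, hεpos]
  · -- optimality of z
    intro j'
    unfold rev
    simp only
    rw [Finset.sum_congr rfl fun i _ => hagg i, Finset.sum_congr rfl fun i _ => hagg i]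
    have hFz : Finset.univ.filter (fun i => v z ≤ v i) = Finset.univ :=
      Finset.filter_true_of_mem fun i _ => hzle i
    rw [hFz, haggsum]
    by_cases hj' : j' = z
    · subst hj'; rw [hFz, haggsum]
    · have hj'z : v z < v j' := by
        apply hv
        simp only [Fin.lt_def, hz]
        exact Nat.pos_of_ne_zero (fun h => hj' (Fin.ext (by simp [hz, h])))
      have hzn : z ∉ Finset.univ.filter (fun i => v j' ≤ v i) := by
        simp [not_le.mpr hj'z]
      have hsplit : ∑ i ∈ Finset.univ.filter (fun i => v j' ≤ v i),
          ((if i = z then f z else 0) + (if i = i₀ then ε else 0)) ≤ ε := by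
        rw [Finset.sum_add_distrib,
          Finset.sum_ite_eq' _ z (fun _ => f z), Finset.sum_ite_eq' _ i₀ (fun _ => ε)]
        rw [if_neg hzn]
        split
        · simp
        · simp [hεpos.le]
      have hnn : (0:ℝ) ≤ ∑ i ∈ Finset.univ.filter (fun i => v j' ≤ v i),
          ((if i = z then f z else 0) + (if i = i₀ then ε else 0)) := by
        apply Finset.sum_nonneg
        intro i _
        apply add_nonneg
        · split
          · exact (hf z).le
          · exact le_refl 0
        · split
          · exact hεpos.le
          · exact le_refl 0
      nlinarith [mul_le_mul_of_nonneg_left hsplit (hvpos j').le,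
        mul_le_mul_of_nonneg_right (hM j') hεpos.le, hεM,
        mul_pos (hvpos z) hεpos]
  · -- weak preference
    intro c i _
    unfold CS
    have h1 : v z ≤ v (p c) := hzle (p c)
    have h2 : v z ≤ v i := hzle i
    exact max_le (le_trans (by linarith) (le_max_left _ _)) (le_max_right _ _)
  · -- strict preference
    refine ⟨c₀, i₀, ?_, ?_⟩
    · dsimp only
      rw [if_neg hi₀ne, zero_add, if_pos ⟨rfl, rfl⟩]
      exact hεpos
    · unfold CS
      rw [max_eq_left (by linarith), max_eq_left (by linarith [hzle i₀])]
      linarith [hpz]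
end

section
/- Existence and characterization of the maximal equal-revenue coalition's first revenue level: define λ_1 = min over i of f(v_i)/(1/v_i − 1/v_{i+1}) (with 1/v_{n+1} := 0). Then the coalition C_1 with cumulative measures F̄^{C_1}(v_i) = λ_1/v_i is well-defined, satisfies f^{C_1}(v_i) = λ_1(1/v_i − 1/v_{i+1}) ≤ f(v_i) for all i with equality for the minimizing index, and every value v_i is an optimal price for C_1 (all prices give revenue λ_1). -/
/-- The first coalition of the maximal equal-revenue segmentation: with
`λ₁ = min_i f(v_i)/(1/v_i − 1/v_{i+1})` (where `1/v_{n+1} := 0`) and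
`g i = λ₁ (1/v_i − 1/v_{i+1})`, the coalition `g` is well defined
(`0 ≤ g ≤ f`, with equality at a minimizing index), and every value is an
optimal price for `g`, all prices earning revenue `λ₁`. -/
theorem stmt12 (n : ℕ) (hn : 0 < n) (v f : Fin n → ℝ) (hv : StrictMono v)
    (hvpos : ∀ i, 0 < v i) (hf : ∀ i, 0 < f i)
    (r : Fin n → ℝ)
    (hr : ∀ i, r i = f i / (1 / v i - if h : i.1 + 1 < n then 1 / v ⟨i.1 + 1, h⟩ else 0))
    (lam : ℝ) (hlam₁ : ∀ i, lam ≤ r i) (hlam₂ : ∃ i, lam = r i)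
    (g : Fin n → ℝ)
    (hg : ∀ i, g i = lam * (1 / v i - if h : i.1 + 1 < n then 1 / v ⟨i.1 + 1, h⟩ else 0)) :
    (∀ i, 0 ≤ g i ∧ g i ≤ f i) ∧ (∃ i, g i = f i) ∧
    (∀ j, rev v g j = lam) ∧ (∀ j, IsOptimal v g j) := by
  set d : Fin n → ℝ :=
    fun i => 1 / v i - if h : i.1 + 1 < n then 1 / v ⟨i.1 + 1, h⟩ else 0 with hd
  have hdpos : ∀ i, 0 < d i := by
    intro i
    simp only [hd]
    split_ifs with h
    · have h1 : v i < v ⟨i.1 + 1, h⟩ := hv (by simp [Fin.lt_def])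
      have h2 := hvpos i
      have h3 : 1 / v ⟨i.1 + 1, h⟩ < 1 / v i := by
        apply one_div_lt_one_div_of_lt <;> assumption
      linarith
    · have := hvpos i
      rw [sub_zero]
      positivity
  have hlampos : 0 < lam := by
    obtain ⟨i, hi⟩ := hlam₂
    rw [hi, hr i]
    exact div_pos (hf i) (hdpos i)
  have hgd : ∀ i, g i = lam * d i := hg
  have hrd : ∀ i, r i = f i / d i := hr
  -- part 1 and 2
  have hgle : ∀ i, g i ≤ f i := by
    intro i
    rw [hgd i]
    have h1 := hlam₁ i
    rw [hrd i] at h1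
    calc lam * d i ≤ (f i / d i) * d i :=
          mul_le_mul_of_nonneg_right h1 (hdpos i).le
      _ = f i := div_mul_cancel₀ (f i) (hdpos i).ne'
  have hgeq : ∃ i, g i = f i := by
    obtain ⟨i, hi⟩ := hlam₂
    refine ⟨i, ?_⟩
    rw [hgd i, hi, hrd i]
    exact div_mul_cancel₀ (f i) (hdpos i).ne'
  -- revenue
  have hrev : ∀ j, rev v g j = lam := by
    intro j
    set w : ℕ → ℝ := fun k => if h : k < n then 1 / v ⟨k, h⟩ else 0 with hw
    have hdw : ∀ i : Fin n, d i = w i.1 - w (i.1 + 1) := by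
      intro i
      simp only [hd, hw, i.2, dif_pos]
    have hfil : Finset.univ.filter (fun i : Fin n => v j ≤ v i)
        = Finset.univ.filter (fun i : Fin n => j.1 ≤ i.1) := by
      ext i
      simp only [Finset.mem_filter, Finset.mem_univ, true_and]
      rw [hv.le_iff_le, Fin.le_def]
    have hsum : ∑ i ∈ Finset.univ.filter (fun i => v j ≤ v i), g i
        = lam * ∑ k ∈ Finset.Ico j.1 n, (w k - w (k + 1)) := by
      rw [hfil, Finset.sum_filter]
      have step1 : (∑ i : Fin n, if j.1 ≤ i.1 then g i else 0)
          = ∑ i : Fin n, (fun k : ℕ =>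
              if j.1 ≤ k then lam * (w k - w (k + 1)) else 0) i.1 := by
        apply Finset.sum_congr rfl
        intro i _
        simp only
        split_ifs
        · rw [hgd i, hdw i]
        · rfl
      rw [step1, Fin.sum_univ_eq_sum_range
        (fun k => if j.1 ≤ k then lam * (w k - w (k + 1)) else 0) n,
        ← Finset.sum_filter]
      have hIco : (Finset.range n).filter (fun k => j.1 ≤ k) = Finset.Ico j.1 n := by
        ext k
        simp [Finset.mem_Ico, and_comm]
      rw [hIco, Finset.mul_sum]
    have htel : ∑ k ∈ Finset.Ico j.1 n, (w k - w (k + 1)) = w j.1 := by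
      rw [Finset.sum_Ico_eq_sum_range]
      have : ∑ k ∈ Finset.range (n - j.1), (w (j.1 + k) - w (j.1 + k + 1))
          = -∑ k ∈ Finset.range (n - j.1),
              ((fun m => w (j.1 + m)) (k + 1) - (fun m => w (j.1 + m)) k) := by
        rw [← Finset.sum_neg_distrib]
        apply Finset.sum_congr rfl
        intro k _
        simp only
        ring_nf
      simp only at this ⊢
      rw [this, Finset.sum_range_sub (fun m => w (j.1 + m)) (n - j.1)]
      have hjn : j.1 + (n - j.1) = n := Nat.add_sub_cancel' j.2.le
      have hwn : w n = 0 := by simp [hw]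
      rw [hjn, hwn]
      ring
    have hwj : w j.1 = 1 / v j := by simp [hw, j.2]
    rw [rev, hsum, htel, hwj]
    have := hvpos j
    field_simp
  refine ⟨fun i => ⟨?_, hgle i⟩, hgeq, hrev, fun j j' => by rw [hrev j, hrev j']⟩
  rw [hgd i]
  exact mul_nonneg hlampos.le (hdpos i).le
end

section
/- Two-value markets: suppose there are exactly two values v_1 < v_2 with market measures f(v_1), f(v_2) > 0, and v_1·(f(v_1)+f(v_2)) < v_2·f(v_2) (so v_1 is not optimal for the whole market). Then in any segmentation, the total measure of value-v_2 consumers who face price v_1 is at most v_1·f(v_1)/(v_2 − v_1), with equality attained by the segmentation {(C_1, v_1), (C_2, v_2)} where C_1 contains all value-v_1 consumers and measure v_1·f(v_1)/(v_2−v_1) of value-v_2 consumers. -/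
/-- Two-value markets where the low price is not optimal overall: in any
segmentation (segments given by measures `a c` of value-`v₁` and `b c` of
value-`v₂` consumers, each priced optimally at `v₁` or `v₂`), the measure of
value-`v₂` consumers facing price `v₁` is at most `v₁·f₁/(v₂ − v₁)`, and this
bound is attained by some segmentation. -/
theorem stmt15 (v₁ v₂ f₁ f₂ : ℝ) (hv₁ : 0 < v₁) (hv : v₁ < v₂)
    (hf₁ : 0 < f₁) (hf₂ : 0 < f₂)
    (hlow : v₁ * (f₁ + f₂) < v₂ * f₂) :
    (∀ (k : ℕ) (a b : Fin k → ℝ) (p : Fin k → ℝ),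
      (∀ c, 0 ≤ a c) → (∀ c, 0 ≤ b c) →
      (∑ c, a c) = f₁ → (∑ c, b c) = f₂ →
      (∀ c, p c = v₁ ∨ p c = v₂) →
      (∀ c, p c = v₁ → v₂ * b c ≤ v₁ * (a c + b c)) →
      (∀ c, p c = v₂ → v₁ * (a c + b c) ≤ v₂ * b c) →
      (∑ c ∈ Finset.univ.filter (fun c => p c = v₁), b c) ≤ v₁ * f₁ / (v₂ - v₁)) ∧
    (∃ (k : ℕ) (a b : Fin k → ℝ) (p : Fin k → ℝ),
      (∀ c, 0 ≤ a c) ∧ (∀ c, 0 ≤ b c) ∧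
      (∑ c, a c) = f₁ ∧ (∑ c, b c) = f₂ ∧
      (∀ c, p c = v₁ ∨ p c = v₂) ∧
      (∀ c, p c = v₁ → v₂ * b c ≤ v₁ * (a c + b c)) ∧
      (∀ c, p c = v₂ → v₁ * (a c + b c) ≤ v₂ * b c) ∧
      (∑ c ∈ Finset.univ.filter (fun c => p c = v₁), b c) = v₁ * f₁ / (v₂ - v₁)) := by
  have hvv : (0:ℝ) < v₂ - v₁ := by linarith
  constructor
  · intro k a b p ha hb hsa hsb hp h1 h2
    have key : ∀ c ∈ Finset.univ.filter (fun c => p c = v₁),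
        b c ≤ v₁ * a c / (v₂ - v₁) := by
      intro c hc
      have hc' : p c = v₁ := (Finset.mem_filter.mp hc).2
      have := h1 c hc'
      rw [le_div_iff₀ hvv]
      nlinarith
    calc (∑ c ∈ Finset.univ.filter (fun c => p c = v₁), b c)
        ≤ ∑ c ∈ Finset.univ.filter (fun c => p c = v₁), v₁ * a c / (v₂ - v₁) :=
          Finset.sum_le_sum key
      _ = v₁ * (∑ c ∈ Finset.univ.filter (fun c => p c = v₁), a c) / (v₂ - v₁) := by
          rw [Finset.mul_sum, Finset.sum_div]
      _ ≤ v₁ * f₁ / (v₂ - v₁) := by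
          gcongr
          rw [← hsa]
          exact Finset.sum_le_sum_of_subset_of_nonneg (Finset.filter_subset _ _)
            (fun c _ _ => ha c)
  · refine ⟨2, ![f₁, 0], ![v₁ * f₁ / (v₂ - v₁), f₂ - v₁ * f₁ / (v₂ - v₁)],
      ![v₁, v₂], ?_, ?_, ?_, ?_, ?_, ?_, ?_, ?_⟩
    · intro c; fin_cases c <;> simp [hf₁.le]
    · intro c
      have hb2 : v₁ * f₁ / (v₂ - v₁) ≤ f₂ := by
        rw [div_le_iff₀ hvv]; nlinarith
      fin_cases c <;> simp
      · positivity
      · linarith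
    · simp
    · simp
    · intro c; fin_cases c <;> simp
    · intro c hc
      have hcan : v₁ * f₁ / (v₂ - v₁) * (v₂ - v₁) = v₁ * f₁ := div_mul_cancel₀ _ hvv.ne'
      fin_cases c <;> simp_all <;> nlinarith
    · intro c hc
      have hcan : v₁ * f₁ / (v₂ - v₁) * (v₂ - v₁) = v₁ * f₁ := div_mul_cancel₀ _ hvv.ne'
      have hb2 : v₁ * f₁ / (v₂ - v₁) ≤ f₂ := by
        rw [div_le_iff₀ hvv]; nlinarith
      fin_cases c <;> simp_all <;> nlinarith
    · have : Finset.univ.filter (fun c => (![v₁, v₂] : Fin 2 → ℝ) c = v₁) = {0} := by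
        ext c; fin_cases c <;> simp [hv.ne']
      rw [this]; simp
end
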